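/- Every cycle C_n of even length with n ≡ 2 (mod 4) admits a locally irregular edge coloring with 3 colors but not with 2 colors. -/

import Mathlib

open Finset SimpleGraph

/-- Degree of `v` in the color class `k` of the edge coloring `c` of `G`. -/
def degIn {V K : Type*} [Fintype V] (G : SimpleGraph V) [DecidableRel G.Adj] [DecidableEq K]
    (c : Sym2 V → K) (k : K) (v : V) : ℕ :=
  (Finset.univ.filter fun w => G.Adj v w ∧ c s(v, w) = k).card

/-- `c` is a locally irregular edge coloring of the simple graph `G`. -/
def IsLIC {V K : Type*} [Fintype V] (G : SimpleGraph V) [DecidableRel G.Adj] [DecidableEq K]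
    (c : Sym2 V → K) : Prop :=
  ∀ v w, G.Adj v w → degIn G c (c s(v, w)) v ≠ degIn G c (c s(v, w)) w

/-- In the 2-multigraph `²G`, each edge of `G` carries a pair of colors (one for each
parallel copy).  `degIn2 G c k v` is the degree of `v` in the color class `k`. -/
def degIn2 {V K : Type*} [Fintype V] (G : SimpleGraph V) [DecidableRel G.Adj] [DecidableEq K]
    (c : Sym2 V → K × K) (k : K) (v : V) : ℕ :=
  ∑ w ∈ Finset.univ.filter (fun w => G.Adj v w),
    ((if (c s(v, w)).1 = k then 1 else 0) + (if (c s(v, w)).2 = k then 1 else 0))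

/-- `c` is a locally irregular edge coloring of the 2-multigraph `²G`. -/
def IsLIC2 {V K : Type*} [Fintype V] (G : SimpleGraph V) [DecidableRel G.Adj] [DecidableEq K]
    (c : Sym2 V → K × K) : Prop :=
  ∀ v w, G.Adj v w → ∀ k : K, ((c s(v, w)).1 = k ∨ (c s(v, w)).2 = k) →
    degIn2 G c k v ≠ degIn2 G c k w

instance {n : ℕ} : DecidableRel (SimpleGraph.pathGraph n).Adj := fun _ _ =>
  decidable_of_iff _ (SimpleGraph.pathGraph_adj).symm

/-! A locally irregular subgraph of a cycle is a disjoint union of paths of length two, so in a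
locally irregular colouring of `C_n` every maximal monochromatic run of edges has length exactly
two: the colour changes at every other vertex, `n / 2` times in all. Two colours change an even
number of times around a cycle, which forces `4 ∣ n`. Three colours suffice for every even `n`:
colour the consecutive pairs of edges alternately `0, 1` and the last pair `2`. -/

section

variable {n : ℕ} {K : Type*}

lemma Fin.add_one_add_one_ne_self (v : Fin (n + 3)) : v + 1 + 1 ≠ v := by
  rw [add_assoc, ne_eq, add_eq_left]
  simp [Fin.ext_iff, Fin.val_add, Nat.mod_eq_of_lt (show 2 < n + 3 by omega)]

lemma Fin.add_one_ne_sub_one (v : Fin (n + 3)) : v + 1 ≠ v - 1 := by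
  intro h
  apply Fin.add_one_add_one_ne_self (v - 1)
  rw [sub_add_cancel, ← h]

lemma degIn_cycleGraph [DecidableEq K] (c : Sym2 (Fin (n + 3)) → K) (k : K) (v : Fin (n + 3)) :
    degIn (cycleGraph (n + 3)) c k v =
      (if c s(v - 1, v) = k then 1 else 0) + (if c s(v, v + 1) = k then 1 else 0) := by
  have hfilter : ({w | (cycleGraph (n + 3)).Adj v w ∧ c s(v, w) = k} : Finset (Fin (n + 3))) =
      ((cycleGraph (n + 3)).neighborFinset v).filter (fun w => c s(v, w) = k) := by
    ext w
    simp
  rw [degIn, hfilter, cycleGraph_neighborFinset, card_filter,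
    sum_pair (Fin.add_one_ne_sub_one v).symm, Sym2.eq_swap]

lemma degIn_cycleGraph_ne_degIn_add_one_iff [DecidableEq K] (c : Sym2 (Fin (n + 3)) → K)
    (v : Fin (n + 3)) :
    degIn (cycleGraph (n + 3)) c (c s(v, v + 1)) v ≠
        degIn (cycleGraph (n + 3)) c (c s(v, v + 1)) (v + 1) ↔
      (c s(v - 1, v) = c s(v, v + 1) ↔ c s(v + 1, v + 1 + 1) ≠ c s(v, v + 1)) := by
  rw [degIn_cycleGraph, degIn_cycleGraph, add_sub_cancel_right]
  split_ifs <;> simp_all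

/-- Every maximal monochromatic run of the cyclic sequence `g` has length exactly two. -/
def RunsOfTwo (g : Fin (n + 3) → K) : Prop :=
  ∀ v, g (v - 1) = g v ↔ g (v + 1) ≠ g v

theorem isLIC_cycleGraph_iff [DecidableEq K] (c : Sym2 (Fin (n + 3)) → K) :
    IsLIC (cycleGraph (n + 3)) c ↔ RunsOfTwo fun v => c s(v, v + 1) := by
  have hsucc : ∀ v, (cycleGraph (n + 3)).Adj v (v + 1) := fun v => by
    simp [← mem_neighborSet, cycleGraph_neighborSet]
  constructor
  · intro h v
    simpa only [sub_add_cancel] using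
      (degIn_cycleGraph_ne_degIn_add_one_iff c v).mp (h v (v + 1) (hsucc v))
  · intro h v w hadj
    have hfwd : ∀ u, degIn (cycleGraph (n + 3)) c (c s(u, u + 1)) u ≠
        degIn (cycleGraph (n + 3)) c (c s(u, u + 1)) (u + 1) := fun u =>
      (degIn_cycleGraph_ne_degIn_add_one_iff c u).mpr (by simpa only [sub_add_cancel] using h u)
    rw [← mem_neighborSet, cycleGraph_neighborSet] at hadj
    rcases hadj with rfl | rfl
    · simpa only [sub_add_cancel, Sym2.eq_swap (a := v - 1), ne_comm] using hfwd (v - 1)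
    · exact hfwd v

theorem RunsOfTwo.two_mul_card_ne_add_one [DecidableEq K] {g : Fin (n + 3) → K}
    (hg : RunsOfTwo g) : 2 * #{v | g (v + 1) ≠ g v} = n + 3 := by
  have hpair : ∀ v : Fin (n + 3),
      (if g (v + 1) ≠ g v then 1 else 0) + (if g (v + 1 + 1) ≠ g (v + 1) then 1 else 0) = 1 := by
    intro v
    have := hg (v + 1)
    rw [add_sub_cancel_right] at this
    split_ifs <;> simp_all
  rw [card_filter]
  calc 2 * ∑ v, (if g (v + 1) ≠ g v then 1 else 0)
      = ∑ v, (if g (v + 1) ≠ g v then 1 else 0) +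
          ∑ v, (if g (v + 1 + 1) ≠ g (v + 1) then 1 else 0) := by
        rw [two_mul]
        exact congrArg _ (Equiv.sum_comp (Equiv.addRight 1) _).symm
    _ = n + 3 := by rw [← sum_add_distrib]; simp only [hpair]; simp

theorem even_card_ne_add_one {N : ℕ} [NeZero N] (g : Fin N → ZMod 2) :
    Even #{v | g (v + 1) ≠ g v} := by
  have hindicator : ∀ a b : ZMod 2, ((if b ≠ a then 1 else 0 : ℕ) : ZMod 2) = b - a := by decide
  rw [← ZMod.natCast_eq_zero_iff_even, card_filter, Nat.cast_sum]
  simp only [hindicator, sum_sub_distrib]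
  exact sub_eq_zero.mpr (Equiv.sum_comp (Equiv.addRight 1) g)

theorem RunsOfTwo.four_dvd {g : Fin (n + 3) → ZMod 2} (hg : RunsOfTwo g) : 4 ∣ n + 3 := by
  obtain ⟨k, hk⟩ := even_card_ne_add_one g
  have := hg.two_mul_card_ne_add_one
  omega

/-- The third colour on the last pair of edges keeps it apart from both neighbouring pairs even
when the number of pairs is odd. -/
def pairColoring (N : ℕ) (v : Fin N) : Fin 3 :=
  if v.val / 2 = N / 2 - 1 then 2 else if v.val / 2 % 2 = 0 then 0 else 1

lemma pairColoring_add_one_eq_iff (hn : Even (n + 3)) (v : Fin (n + 3)) :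
    pairColoring (n + 3) (v + 1) = pairColoring (n + 3) v ↔ Even v.val := by
  obtain ⟨k, hk⟩ := hn
  have hv := v.isLt
  rw [Nat.even_iff]
  unfold pairColoring
  rw [Fin.val_add_one, Fin.ext_iff]
  split_ifs <;> simp_all [Fin.ext_iff] <;> omega

theorem runsOfTwo_pairColoring (hn : Even (n + 3)) : RunsOfTwo (pairColoring (n + 3)) := by
  intro v
  have hprev := pairColoring_add_one_eq_iff hn (v - 1)
  rw [sub_add_cancel, Fin.coe_sub_one, eq_comm] at hprev
  rw [hprev, ne_eq, pairColoring_add_one_eq_iff hn]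
  obtain ⟨k, hk⟩ := hn
  split_ifs with hv
  · subst hv
    simp [Nat.even_iff]
    omega
  · rw [Fin.ext_iff, Fin.val_zero] at hv
    simp only [Nat.even_iff]
    omega

theorem exists_sym2_fun_eq_on_cycle_edges (g : Fin (n + 3) → K) :
    ∃ c : Sym2 (Fin (n + 3)) → K, ∀ v, c s(v, v + 1) = g v := by
  let f (a b : Fin (n + 3)) : K := if b = a + 1 then g a else if a = b + 1 then g b else g 0
  have hf : ∀ a b, f a b = f b a := by
    intro a b
    rcases em (b = a + 1) with rfl | hab
    · simp [f, (Fin.add_one_add_one_ne_self a).symm]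
    rcases em (a = b + 1) with rfl | hba
    · simp [f, (Fin.add_one_add_one_ne_self b).symm]
    simp [f, hab, hba]
  exact ⟨Sym2.lift ⟨f, hf⟩, fun v => by simp [f]⟩

theorem exists_isLIC_cycleGraph_fin_three (hn : Even (n + 3)) :
    ∃ c : Sym2 (Fin (n + 3)) → Fin 3, IsLIC (cycleGraph (n + 3)) c := by
  obtain ⟨c, hc⟩ := exists_sym2_fun_eq_on_cycle_edges (pairColoring (n + 3))
  refine ⟨c, (isLIC_cycleGraph_iff c).mpr ?_⟩
  simpa only [hc] using runsOfTwo_pairColoring hn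

theorem four_dvd_of_isLIC_cycleGraph_fin_two {c : Sym2 (Fin (n + 3)) → Fin 2}
    (hc : IsLIC (cycleGraph (n + 3)) c) : 4 ∣ n + 3 :=
  RunsOfTwo.four_dvd ((isLIC_cycleGraph_iff c).mp hc)

end

/-- Every cycle `C_n` with `n ≡ 2 (mod 4)` admits a locally irregular edge coloring with
3 colors but not with 2 colors. -/
theorem stmt_7 (n : ℕ) (hn : 3 ≤ n) (h4 : n % 4 = 2) :
    (∃ c : Sym2 (Fin n) → Fin 3, IsLIC (cycleGraph n) c) ∧
    ¬ ∃ c : Sym2 (Fin n) → Fin 2, IsLIC (cycleGraph n) c := by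
  obtain ⟨m, rfl⟩ : ∃ m, n = m + 3 := ⟨n - 3, by omega⟩
  refine ⟨exists_isLIC_cycleGraph_fin_three (Nat.even_iff.mpr (by omega)), ?_⟩
  rintro ⟨c, hc⟩
  have := four_dvd_of_isLIC_cycleGraph_fin_two hc
  omega
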